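/- Let n ≥ 1 and let K : ℝⁿ → ℝ be a continuous function that is integrable and square-integrable, whose Fourier transform \hat K is integrable and satisfies 0 ≤ \hat K(ξ) ≤ 1 for all ξ ∈ ℝⁿ. Then ∫_{ℝⁿ} K(x)² dx ≤ K(0). In particular, for any measurable set B ⊆ ℝⁿ, (1/K(0))·∫_B K(x)² dx ≤ 1 whenever K(0) > 0. -/

import Mathlib

open MeasureTheory Filter Real FourierTransform
open scoped ENNReal Topology InnerProductSpace

/-!
By Fourier inversion at the origin, `K 0 = ∫ K̂`, and by Plancherel, `∫ K² = ∫ K̂²`.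
Since `0 ≤ K̂ ≤ 1`, we have `K̂² ≤ K̂` pointwise, hence `∫ K² ≤ K 0`; restricting the
integral of the nonnegative `K²` to `B` only makes it smaller.
-/

section Fourier

variable {V E : Type*} [NormedAddCommGroup V] [InnerProductSpace ℝ V] [FiniteDimensional ℝ V]
  [MeasurableSpace V] [BorelSpace V]
  [NormedAddCommGroup E] [InnerProductSpace ℂ E] [CompleteSpace E]

theorem Continuous.integral_norm_sq_fourier_eq {f : V → E} (hf_cont : Continuous f)
    (hf : Integrable f) (hFf : Integrable (𝓕 f)) :
    ∫ ξ, ‖𝓕 f ξ‖ ^ 2 = ∫ x, ‖f x‖ ^ 2 := by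
  have h := VectorFourier.integral_sesq_fourierIntegral_eq_neg_flip (L := innerₗ V)
    (μ := volume) (ν := volume) (innerSL ℂ)
    Real.continuous_fourierChar continuous_inner hf hFf
  rw [flip_innerₗ] at h
  change ∫ ξ, ⟪𝓕 f ξ, 𝓕 f ξ⟫_ℂ = ∫ x, ⟪f x, 𝓕⁻ (𝓕 f) x⟫_ℂ at h
  rw [hf_cont.fourierInv_fourier_eq hf hFf] at h
  simp_rw [inner_self_eq_norm_sq_to_K] at h
  exact_mod_cast h

theorem Continuous.integral_fourier_eq_apply_zero {f : V → E} (hf_cont : Continuous f)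
    (hf : Integrable f) (hFf : Integrable (𝓕 f)) :
    ∫ ξ, 𝓕 f ξ = f 0 := by
  rw [← congrFun (hf_cont.fourierInv_fourier_eq hf hFf) 0, Real.fourierInv_eq]
  simp

end Fourier

theorem integral_sq_le_integral_of_nonneg_of_le_one {α : Type*} [MeasurableSpace α]
    {μ : Measure α} {g : α → ℝ} (hg : Integrable g μ) (hg_nonneg : ∀ x, 0 ≤ g x)
    (hg_le_one : ∀ x, g x ≤ 1) :
    ∫ x, g x ^ 2 ∂μ ≤ ∫ x, g x ∂μ := by
  have hsq_le : ∀ x, g x ^ 2 ≤ g x := fun x => by nlinarith [hg_nonneg x, hg_le_one x]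
  have hsq_int : Integrable (fun x => g x ^ 2) μ :=
    hg.mono' (hg.aestronglyMeasurable.pow 2) (ae_of_all _ fun x => by
      rw [Real.norm_eq_abs, abs_of_nonneg (sq_nonneg _)]; exact hsq_le x)
  exact integral_mono hsq_int hg hsq_le

theorem integral_sq_le_apply_zero_of_fourier_nonneg_of_le_one {V : Type*}
    [NormedAddCommGroup V] [InnerProductSpace ℝ V] [FiniteDimensional ℝ V]
    [MeasurableSpace V] [BorelSpace V] {K Khat : V → ℝ} (hK_cont : Continuous K)
    (hK_int : Integrable K) (hKhat : ∀ ξ, 𝓕 (fun x => (K x : ℂ)) ξ = (Khat ξ : ℂ))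
    (hKhat_int : Integrable Khat) (hKhat_nonneg : ∀ ξ, 0 ≤ Khat ξ)
    (hKhat_le_one : ∀ ξ, Khat ξ ≤ 1) :
    ∫ x, K x ^ 2 ≤ K 0 := by
  set f : V → ℂ := fun x => (K x : ℂ)
  have hFf : 𝓕 f = fun ξ => (Khat ξ : ℂ) := funext hKhat
  have hf_cont : Continuous f := Complex.continuous_ofReal.comp hK_cont
  have hFf_int : Integrable (𝓕 f) := hFf ▸ hKhat_int.ofReal
  have parseval : ∫ ξ, Khat ξ ^ 2 = ∫ x, K x ^ 2 := by
    simpa [hFf, f, Complex.norm_real, sq_abs] using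
      hf_cont.integral_norm_sq_fourier_eq hK_int.ofReal hFf_int
  have inversion_at_zero : ∫ ξ, Khat ξ = K 0 := by
    have h := hf_cont.integral_fourier_eq_apply_zero hK_int.ofReal hFf_int
    simpa only [hKhat, f, integral_complex_ofReal, Complex.ofReal_inj] using h
  calc ∫ x, K x ^ 2 = ∫ ξ, Khat ξ ^ 2 := parseval.symm
    _ ≤ ∫ ξ, Khat ξ :=
      integral_sq_le_integral_of_nonneg_of_le_one hKhat_int hKhat_nonneg hKhat_le_one
    _ = K 0 := inversion_at_zero

theorem repulsion_measure_le_one (n : ℕ)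
    (K : EuclideanSpace ℝ (Fin n) → ℝ)
    (hK_cont : Continuous K)
    (hK_int : Integrable K)
    (hK_sq_int : Integrable (fun x => K x ^ 2))
    (Khat : EuclideanSpace ℝ (Fin n) → ℝ)
    (hKhat : ∀ ξ, 𝓕 (fun x => (K x : ℂ)) ξ = (Khat ξ : ℂ))
    (hKhat_int : Integrable Khat)
    (hKhat_nonneg : ∀ ξ, 0 ≤ Khat ξ)
    (hKhat_le_one : ∀ ξ, Khat ξ ≤ 1) :
    (∫ x, K x ^ 2) ≤ K 0 ∧
      ∀ B : Set (EuclideanSpace ℝ (Fin n)), MeasurableSet B → 0 < K 0 →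
        (1 / K 0) * ∫ x in B, K x ^ 2 ≤ 1 := by
  have h := integral_sq_le_apply_zero_of_fourier_nonneg_of_le_one hK_cont hK_int hKhat
    hKhat_int hKhat_nonneg hKhat_le_one
  refine ⟨h, fun B _ hK0 => ?_⟩
  rw [one_div_mul_eq_div, div_le_one hK0]
  exact (setIntegral_le_integral hK_sq_int (ae_of_all _ fun x => sq_nonneg _)).trans h
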